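/- Let λ ∈ ℝ, set μ_j := −j⁴π⁴ + λ j²π², and let a ∈ ℝ with a ∉ 𝒩₁. Then there exists a constant C > 0 such that for every positive integer l one has ∑_{j≥1, j≠l} j² / (a + μ_j − μ_l)² ≤ C / l⁴. -/

import Mathlib

/-!
Since μ_j − μ_l = (l² − j²)(π⁴(j² + l²) − λπ²), once j² + l² is large the denominator satisfies
|a + μ_j − μ_l| ≥ (π⁴/4)|j² − l²|(j² + l²); on the finitely many remaining pairs j ≠ l it is
bounded away from 0 because a ∉ 𝒩₁. So |a + μ_j − μ_l| ≥ ε|j² − l²|(j² + l²) for all j ≠ l,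
each term is at most 1/(ε² l⁴ (j − l)²), and the sum is at most (ε² l⁴)⁻¹ ∑_{n ∈ ℤ} 1/n².
-/

open Real

noncomputable def mu (lam x : ℝ) : ℝ := -x ^ 4 * π ^ 4 + lam * x ^ 2 * π ^ 2

lemma exists_pos_le_of_finite_setOf_lt {ι : Type*} {s : Set ι} {f : ι → ℝ} {c : ℝ} (hc : 0 < c)
    (hpos : ∀ i ∈ s, 0 < f i) (hfin : {i ∈ s | f i < c}.Finite) :
    ∃ ε > 0, ∀ i ∈ s, ε ≤ f i := by
  obtain ⟨ε, hεmem, hεmin⟩ := Set.exists_min_image (insert c (f '' {i ∈ s | f i < c})) id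
    ((hfin.image f).insert c) (Set.insert_nonempty _ _)
  refine ⟨ε, ?_, fun i hi => ?_⟩
  · rcases hεmem with rfl | ⟨i, ⟨hi, -⟩, rfl⟩
    exacts [hc, hpos i hi]
  · by_cases hic : f i < c
    · exact hεmin (f i) (Or.inr ⟨i, ⟨hi, hic⟩, rfl⟩)
    · exact (hεmin c (Set.mem_insert _ _)).trans (not_lt.mp hic)

lemma PNat.finite_setOf_sq_add_sq_lt (R : ℝ) :
    {p : ℕ+ × ℕ+ | (p.1 : ℝ) ^ 2 + (p.2 : ℝ) ^ 2 < R}.Finite := by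
  let m : ℕ+ := ⟨⌈R⌉₊ + 1, Nat.succ_pos _⟩
  refine (Set.finite_Iic (m, m)).subset fun p hp => ?_
  have hle : ∀ n : ℕ+, (n : ℝ) ^ 2 < R → n ≤ m := fun n hn => by
    have h1 : (1 : ℝ) ≤ n := by exact_mod_cast n.pos
    have hnR : (n : ℝ) ≤ ⌈R⌉₊ := by nlinarith [Nat.le_ceil R]
    rw [← PNat.coe_le_coe, PNat.mk_coe]
    exact (Nat.cast_le.mp hnR).trans (Nat.le_succ _)
  have hp' : (p.1 : ℝ) ^ 2 + (p.2 : ℝ) ^ 2 < R := hp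
  exact ⟨hle p.1 (by nlinarith), hle p.2 (by nlinarith)⟩

lemma one_le_abs_sq_sub_sq {m n : ℕ} (h : m ≠ n) : 1 ≤ |(m : ℝ) ^ 2 - (n : ℝ) ^ 2| := by
  have hsq : (m : ℤ) ^ 2 - (n : ℤ) ^ 2 ≠ 0 := by
    rw [sub_ne_zero]
    exact_mod_cast (Nat.pow_left_injective two_ne_zero).ne h
  exact_mod_cast Int.one_le_abs hsq

lemma mu_sub_mu (lam x y : ℝ) :
    mu lam x - mu lam y = (y ^ 2 - x ^ 2) * (π ^ 4 * (x ^ 2 + y ^ 2) - lam * π ^ 2) := by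
  unfold mu; ring

lemma mul_le_abs_add_mu_sub_mu {lam a x y : ℝ} (hxy : 1 ≤ |x ^ 2 - y ^ 2|)
    (hlarge : 2 * |lam| * π ^ 2 + 4 * |a| ≤ π ^ 4 * (x ^ 2 + y ^ 2)) :
    π ^ 4 / 4 * (|x ^ 2 - y ^ 2| * (x ^ 2 + y ^ 2)) ≤ |a + mu lam x - mu lam y| := by
  set S := x ^ 2 + y ^ 2
  set B := |x ^ 2 - y ^ 2|
  have hlam : lam * π ^ 2 ≤ |lam| * π ^ 2 := by gcongr; exact le_abs_self lam
  have hinner : π ^ 4 * S / 2 ≤ π ^ 4 * S - lam * π ^ 2 := by linarith [abs_nonneg a]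
  have hdiff : B * (π ^ 4 * S / 2) ≤ |mu lam x - mu lam y| := by
    have hpos : 0 ≤ π ^ 4 * S - lam * π ^ 2 := (by positivity : 0 ≤ π ^ 4 * S / 2).trans hinner
    rw [mu_sub_mu, abs_mul, abs_sub_comm, abs_of_nonneg hpos]
    exact mul_le_mul_of_nonneg_left hinner (abs_nonneg _)
  have ha : |a| ≤ B * (π ^ 4 * S / 4) := calc
    |a| ≤ 1 * (π ^ 4 * S / 4) := by linarith [(by positivity : 0 ≤ |lam| * π ^ 2)]
    _ ≤ B * (π ^ 4 * S / 4) := by gcongr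
  calc π ^ 4 / 4 * (B * S) = B * (π ^ 4 * S / 2) - B * (π ^ 4 * S / 4) := by ring
    _ ≤ |mu lam x - mu lam y| - |-a| := by rw [abs_neg]; linarith
    _ ≤ |mu lam x - mu lam y - -a| := abs_sub_abs_le_abs_sub _ _
    _ = |a + mu lam x - mu lam y| := congrArg abs (by ring)

lemma exists_pos_mul_le_abs_add_mu_sub_mu {lam a : ℝ}
    (ha : ∀ j l : ℕ+, a + mu lam j - mu lam l ≠ 0) :
    ∃ ε > 0, ∀ j l : ℕ+, j ≠ l →
      ε * (|(j : ℝ) ^ 2 - (l : ℝ) ^ 2| * ((j : ℝ) ^ 2 + (l : ℝ) ^ 2)) ≤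
        |a + mu lam j - mu lam l| := by
  set w : ℕ+ × ℕ+ → ℝ := fun p => |(p.1 : ℝ) ^ 2 - (p.2 : ℝ) ^ 2| * ((p.1 : ℝ) ^ 2 + (p.2 : ℝ) ^ 2)
  set f : ℕ+ × ℕ+ → ℝ := fun p => |a + mu lam p.1 - mu lam p.2| / w p
  have hw : ∀ p : ℕ+ × ℕ+, p.1 ≠ p.2 → 0 < w p := fun p hp => by
    have := one_le_abs_sq_sub_sq (PNat.coe_injective.ne hp)
    have : (0 : ℝ) < p.1 := by exact_mod_cast p.1.pos
    positivity
  have hfin : {p ∈ {p : ℕ+ × ℕ+ | p.1 ≠ p.2} | f p < π ^ 4 / 4}.Finite := by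
    refine (PNat.finite_setOf_sq_add_sq_lt ((2 * |lam| * π ^ 2 + 4 * |a|) / π ^ 4)).subset
      fun p ⟨hp, hlt⟩ => ?_
    show (_ : ℝ) < _
    by_contra! hlarge
    rw [div_le_iff₀' (by positivity)] at hlarge
    rw [div_lt_iff₀ (hw p hp)] at hlt
    exact hlt.not_ge <|
      mul_le_abs_add_mu_sub_mu (one_le_abs_sq_sub_sq (PNat.coe_injective.ne hp)) hlarge
  obtain ⟨ε, hε, hεle⟩ := exists_pos_le_of_finite_setOf_lt (by positivity)
    (fun p hp => div_pos (abs_pos.mpr (ha _ _)) (hw p hp)) hfin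
  exact ⟨ε, hε, fun j l hjl => (le_div_iff₀ (hw (j, l) hjl)).mp (hεle (j, l) hjl)⟩

lemma sq_div_sq_le_of_mul_le_abs {x y D ε : ℝ} (hx : 0 ≤ x) (hy : 0 < y) (hxy : x ≠ y)
    (hε : 0 < ε)
    (hD : ε * (|x ^ 2 - y ^ 2| * (x ^ 2 + y ^ 2)) ≤ |D|) :
    x ^ 2 / D ^ 2 ≤ 1 / (ε ^ 2 * y ^ 4) / (x - y) ^ 2 := by
  have hsub : x - y ≠ 0 := sub_ne_zero.mpr hxy
  have hP : 0 < ε ^ 2 * ((x - y) ^ 2 * (x + y) ^ 2 * (x ^ 2 + y ^ 2) ^ 2) := by positivity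
  have hPD : ε ^ 2 * ((x - y) ^ 2 * (x + y) ^ 2 * (x ^ 2 + y ^ 2) ^ 2) ≤ D ^ 2 := by
    rw [← sq_abs D]
    calc _ = (ε * (|x ^ 2 - y ^ 2| * (x ^ 2 + y ^ 2))) ^ 2 := by
          rw [mul_pow, mul_pow, sq_abs]; ring
      _ ≤ |D| ^ 2 := by gcongr
  calc x ^ 2 / D ^ 2 ≤ x ^ 2 / (ε ^ 2 * ((x - y) ^ 2 * (x + y) ^ 2 * (x ^ 2 + y ^ 2) ^ 2)) := by
        gcongr
    _ ≤ 1 / (ε ^ 2 * y ^ 4) / (x - y) ^ 2 := by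
        rw [div_div, div_le_div_iff₀ hP (by positivity), one_mul]
        have h1 : x ^ 2 ≤ (x + y) ^ 2 := by gcongr; linarith
        have h2 : y ^ 4 ≤ (x ^ 2 + y ^ 2) ^ 2 := by nlinarith [sq_nonneg x, sq_nonneg y]
        calc x ^ 2 * (ε ^ 2 * y ^ 4 * (x - y) ^ 2)
            = ε ^ 2 * (x - y) ^ 2 * (x ^ 2 * y ^ 4) := by ring
          _ ≤ ε ^ 2 * (x - y) ^ 2 * ((x + y) ^ 2 * (x ^ 2 + y ^ 2) ^ 2) := by gcongr
          _ = _ := by ring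

lemma summable_and_tsum_le_of_le_div_sq {ι : Type*} {f : ι → ℝ} {φ : ι → ℤ}
    (hφ : Function.Injective φ) {c : ℝ} (hc : 0 ≤ c) (hf0 : ∀ i, 0 ≤ f i)
    (hf : ∀ i, f i ≤ c / (φ i : ℝ) ^ 2) :
    Summable f ∧ ∑' i, f i ≤ c * ∑' n : ℤ, 1 / (n : ℝ) ^ 2 := by
  have hT : Summable fun n : ℤ => 1 / (n : ℝ) ^ 2 := Real.summable_one_div_int_pow.mpr one_lt_two
  have hf' : ∀ i, f i ≤ c * (1 / (φ i : ℝ) ^ 2) := fun i => (hf i).trans_eq (mul_one_div _ _).symm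
  have hg : Summable fun i => c * (1 / (φ i : ℝ) ^ 2) := (hT.comp_injective hφ).mul_left c
  have hfs : Summable f := hg.of_nonneg_of_le hf0 hf'
  refine ⟨hfs, (hfs.tsum_le_tsum hf' hg).trans ?_⟩
  rw [tsum_mul_left]
  exact mul_le_mul_of_nonneg_left (hT.comp_injective hφ |>.tsum_le_tsum_of_inj φ hφ
    (fun n _ => by positivity) (fun _ => le_rfl) hT) hc

/-- With μ_j := −j⁴π⁴ + λj²π² and a ∉ 𝒩₁ := {μ_k − μ_j : j, k positive integers},
there is C > 0 such that ∑_{j≠l} j²/(a + μ_j − μ_l)² ≤ C/l⁴ for all l. -/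
theorem stmt12 (lam a : ℝ)
    (ha : a ∉ {x : ℝ | ∃ j k : ℕ+,
      x = (-(k : ℝ) ^ 4 * π ^ 4 + lam * (k : ℝ) ^ 2 * π ^ 2)
        - (-(j : ℝ) ^ 4 * π ^ 4 + lam * (j : ℝ) ^ 2 * π ^ 2)}) :
    ∃ C > (0 : ℝ), ∀ l : ℕ+,
      Summable (fun j : {j : ℕ+ // j ≠ l} =>
        ((j : ℕ+) : ℝ) ^ 2 /
          (a + (-((j : ℕ+) : ℝ) ^ 4 * π ^ 4 + lam * ((j : ℕ+) : ℝ) ^ 2 * π ^ 2)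
            - (-(l : ℝ) ^ 4 * π ^ 4 + lam * (l : ℝ) ^ 2 * π ^ 2)) ^ 2) ∧
      (∑' j : {j : ℕ+ // j ≠ l},
        ((j : ℕ+) : ℝ) ^ 2 /
          (a + (-((j : ℕ+) : ℝ) ^ 4 * π ^ 4 + lam * ((j : ℕ+) : ℝ) ^ 2 * π ^ 2)
            - (-(l : ℝ) ^ 4 * π ^ 4 + lam * (l : ℝ) ^ 2 * π ^ 2)) ^ 2)
        ≤ C / (l : ℝ) ^ 4 := by
  obtain ⟨ε, hε, hbound⟩ := exists_pos_mul_le_abs_add_mu_sub_mu (lam := lam) (a := a)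
    fun j l h => ha ⟨j, l, by unfold mu at h; linarith⟩
  have hT : 0 < ∑' n : ℤ, 1 / (n : ℝ) ^ 2 :=
    (Real.summable_one_div_int_pow.mpr one_lt_two).tsum_pos (fun _ => by positivity) 1 (by simp)
  refine ⟨(∑' n : ℤ, 1 / (n : ℝ) ^ 2) / ε ^ 2, by positivity, fun l => ?_⟩
  have hl : (0 : ℝ) < l := by exact_mod_cast l.pos
  obtain ⟨hsum, hle⟩ := summable_and_tsum_le_of_le_div_sq
    (f := fun j : {j : ℕ+ // j ≠ l} => ((j : ℕ+) : ℝ) ^ 2 / (a + mu lam j - mu lam l) ^ 2)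
    (φ := fun j : {j : ℕ+ // j ≠ l} => ((j : ℕ) : ℤ) - (l : ℕ))
    (fun i j h => Subtype.ext <| PNat.coe_injective <| by simpa using h)
    (c := 1 / (ε ^ 2 * (l : ℝ) ^ 4)) (by positivity) (fun _ => by positivity)
    fun j => by
      push_cast
      exact sq_div_sq_le_of_mul_le_abs (by positivity) hl
        (by exact_mod_cast PNat.coe_injective.ne j.2) hε (hbound _ _ j.2)
  exact ⟨hsum, hle.trans_eq (by field_simp)⟩
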